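/- arXiv:2108.03268 — 4 statements merged into one kernel-verified Lean document; each statement's English description precedes it below -/
import Mathlib

section
/- The infinite series Σ_{k=1}^{∞} (∏_{i=1}^{k}(p_i - 1)) / ((p_k - 1) · ∏_{i=1}^{k} p_i), where p_i is the i-th prime, converges to 1. Equivalently, 1/2 + 1/6 + 2/30 + 8/210 + 48/2310 + ... = 1. -/
/-!
With `P n = ∏_{i ≤ n} (1 - 1/p_i)`, the `k`-th term equals `P (k-1) / p_k = P (k-1) - P k`, so the
partial sums telescope to `1 - P n`. Since `1 - x ≤ exp (-x)`, `P n ≤ exp (-∑_{i ≤ n} 1/p_i)`, which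
tends to `0` because the sum of the reciprocals of the primes diverges.
-/

open Filter Finset Topology

/-- `p i` is the `i`-th prime (1-indexed: `p 1 = 2`). -/
noncomputable def p (i : ℕ) : ℕ := Nat.nth Nat.Prime (i - 1)

theorem Finset.sum_range_mul_prod_one_sub {R : Type*} [CommRing R] (x : ℕ → R) (n : ℕ) :
    ∑ k ∈ range n, x k * ∏ i ∈ range k, (1 - x i) = 1 - ∏ i ∈ range n, (1 - x i) := by
  induction n with
  | zero => simp
  | succ n ih => rw [sum_range_succ, ih, prod_range_succ]; ring

@[to_additive sum_Icc_one_eq_sum_range]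
theorem Finset.prod_Icc_one_eq_prod_range {M : Type*} [CommMonoid M] (f : ℕ → M) (n : ℕ) :
    ∏ i ∈ Icc 1 n, f i = ∏ i ∈ range n, f (i + 1) := by
  rw [← Ico_add_one_right_eq_Icc, prod_Ico_eq_prod_range, Nat.add_sub_cancel]
  simp only [add_comm]

theorem prod_range_succ_sub_one_div {K : Type*} [Field K] {q : ℕ → K} (hq₀ : ∀ i, q i ≠ 0)
    {j : ℕ} (hq₁ : q j ≠ 1) :
    (∏ i ∈ range (j + 1), (q i - 1)) / ((q j - 1) * ∏ i ∈ range (j + 1), q i) =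
      1 / q j * ∏ i ∈ range j, (1 - 1 / q i) := by
  have hprod : ∏ i ∈ range j, (1 - 1 / q i) =
      (∏ i ∈ range j, (q i - 1)) / ∏ i ∈ range j, q i := by
    rw [← prod_div_distrib]
    exact prod_congr rfl fun i _ ↦ by field_simp [hq₀ i]
  have hprod₀ : ∏ i ∈ range j, q i ≠ 0 := prod_ne_zero_iff.2 fun i _ ↦ hq₀ i
  rw [hprod, prod_range_succ, prod_range_succ]
  field_simp [hq₀ j, sub_ne_zero.2 hq₁, hprod₀]

theorem tendsto_prod_range_one_sub_of_not_summable {x : ℕ → ℝ} (hx₀ : ∀ i, 0 ≤ x i)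
    (hx₁ : ∀ i, x i ≤ 1) (hx : ¬ Summable x) :
    Tendsto (fun n ↦ ∏ i ∈ range n, (1 - x i)) atTop (𝓝 0) := by
  have hle (n : ℕ) : ∏ i ∈ range n, (1 - x i) ≤ Real.exp (-∑ i ∈ range n, x i) := by
    rw [← sum_neg_distrib, Real.exp_sum]
    exact prod_le_prod (fun i _ ↦ sub_nonneg.2 (hx₁ i)) fun i _ ↦ Real.one_sub_le_exp_neg _
  have hsum := (not_summable_iff_tendsto_nat_atTop_of_nonneg hx₀).1 hx
  exact squeeze_zero (fun n ↦ prod_nonneg fun i _ ↦ sub_nonneg.2 (hx₁ i)) hle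
    (Real.tendsto_exp_atBot.comp (tendsto_neg_atTop_atBot.comp hsum))

theorem not_summable_one_div_nth_prime :
    ¬ Summable (fun n ↦ 1 / (Nat.nth Nat.Prime n : ℝ)) := by
  have hprime := Nat.infinite_setOfPred_prime
  intro h
  refine not_summable_one_div_on_primes
    (((Nat.nth_injective hprime).summable_iff fun n hn ↦ ?_).1 ?_)
  · rw [Nat.range_nth_of_infinite hprime] at hn
    exact Set.indicator_of_notMem hn _
  · exact h.congr fun n ↦ by simp

theorem sum_Icc_eq_one_sub_prod_one_sub_one_div_nth_prime (n : ℕ) :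
    ∑ k ∈ Icc 1 n, (∏ i ∈ Icc 1 k, ((p i : ℝ) - 1)) /
        (((p k : ℝ) - 1) * ∏ i ∈ Icc 1 k, (p i : ℝ)) =
      1 - ∏ i ∈ range n, (1 - 1 / (Nat.nth Nat.Prime i : ℝ)) := by
  have hp (i : ℕ) : p (i + 1) = Nat.nth Nat.Prime i := rfl
  have hq₀ (i : ℕ) : (Nat.nth Nat.Prime i : ℝ) ≠ 0 := by
    exact_mod_cast (Nat.prime_nth_prime i).ne_zero
  have hq₁ (i : ℕ) : (Nat.nth Nat.Prime i : ℝ) ≠ 1 := by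
    exact_mod_cast (Nat.prime_nth_prime i).ne_one
  simp only [sum_Icc_one_eq_sum_range, prod_Icc_one_eq_prod_range, hp,
    prod_range_succ_sub_one_div hq₀ (hq₁ _), sum_range_mul_prod_one_sub]

theorem stmt_1 :
    Tendsto (fun n : ℕ => ∑ k ∈ Finset.Icc 1 n,
        (∏ i ∈ Finset.Icc 1 k, ((p i : ℝ) - 1)) /
          (((p k : ℝ) - 1) * ∏ i ∈ Finset.Icc 1 k, (p i : ℝ)))
      atTop (𝓝 1) := by
  simp only [sum_Icc_eq_one_sub_prod_one_sub_one_div_nth_prime]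
  have hx₀ (i : ℕ) : 0 ≤ 1 / (Nat.nth Nat.Prime i : ℝ) := by positivity
  have hx₁ (i : ℕ) : 1 / (Nat.nth Nat.Prime i : ℝ) ≤ 1 :=
    div_le_one_of_le₀ (by exact_mod_cast (Nat.prime_nth_prime i).one_lt.le) (by positivity)
  simpa using tendsto_const_nhds.sub
    (tendsto_prod_range_one_sub_of_not_summable hx₀ hx₁ not_summable_one_div_nth_prime)
end

section
/- The n-th term T_n = (∏_{i=1}^{n}(p_i - 1)) / ((p_n - 1) · ∏_{i=1}^{n} p_i) satisfies the recursive relation T_n = (1 - S_n)/(p_n - 1), where S_n is the n-th partial sum of the series. -/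
open Filter Finset Topology

/- With `R k = ∏_{i ≤ k} (a i - 1) / a i`, the `k`-th summand is `R (k-1) / a k = R (k-1) - R k`,
so the sum telescopes. -/
theorem sum_Icc_prod_sub_one_div_eq {K : Type*} [Field K] (a : ℕ → K)
    (ha₀ : ∀ i, a i ≠ 0) (ha₁ : ∀ i, a i ≠ 1) (n : ℕ) :
    ∑ k ∈ Icc 1 n, (∏ i ∈ Icc 1 k, (a i - 1)) / ((a k - 1) * ∏ i ∈ Icc 1 k, a i) =
      1 - (∏ i ∈ Icc 1 n, (a i - 1)) / ∏ i ∈ Icc 1 n, a i := by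
  induction n with
  | zero => simp
  | succ n ih =>
    have hprod : ∏ i ∈ Icc 1 n, a i ≠ 0 := prod_ne_zero_iff.mpr fun i _ => ha₀ i
    have hsub : a (n + 1) - 1 ≠ 0 := sub_ne_zero.mpr (ha₁ _)
    have hle : 1 ≤ n + 1 := n.succ_pos
    rw [sum_Icc_succ_top hle, ih, prod_Icc_succ_top hle, prod_Icc_succ_top hle]
    field_simp [ha₀ (n + 1)]
    ring

theorem p_cast_ne_zero (i : ℕ) : (p i : ℚ) ≠ 0 :=
  Nat.cast_ne_zero.mpr (Nat.prime_nth_prime (i - 1)).ne_zero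

theorem p_cast_ne_one (i : ℕ) : (p i : ℚ) ≠ 1 :=
  Nat.cast_ne_one.mpr (Nat.prime_nth_prime (i - 1)).ne_one

theorem stmt_2_general (n : ℕ) :
    (∏ i ∈ Finset.Icc 1 n, ((p i : ℚ) - 1)) /
        (((p n : ℚ) - 1) * ∏ i ∈ Finset.Icc 1 n, (p i : ℚ)) =
      (1 - ∑ k ∈ Finset.Icc 1 n,
          (∏ i ∈ Finset.Icc 1 k, ((p i : ℚ) - 1)) /
            (((p k : ℚ) - 1) * ∏ i ∈ Finset.Icc 1 k, (p i : ℚ))) /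
        ((p n : ℚ) - 1) := by
  rw [sum_Icc_prod_sub_one_div_eq _ p_cast_ne_zero p_cast_ne_one, sub_sub_cancel, div_div,
    mul_comm]

theorem stmt_2 (n : ℕ) (hn : 1 ≤ n) :
    (∏ i ∈ Finset.Icc 1 n, ((p i : ℚ) - 1)) /
        (((p n : ℚ) - 1) * ∏ i ∈ Finset.Icc 1 n, (p i : ℚ)) =
      (1 - ∑ k ∈ Finset.Icc 1 n,
          (∏ i ∈ Finset.Icc 1 k, ((p i : ℚ) - 1)) /
            (((p k : ℚ) - 1) * ∏ i ∈ Finset.Icc 1 k, (p i : ℚ))) /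
        ((p n : ℚ) - 1) :=
  stmt_2_general n
end

section
/- The infinite series Σ_{k=1}^{∞} (∏_{i=1}^{k}(p_i^2 - 1)) / ((p_k^2 - 1) · ∏_{i=1}^{k} p_i^2), where p_i is the i-th prime, converges to 1 - 6/π². -/
open Filter Finset Topology

/-! Writing `P n = ∏_{i ≤ n} (1 - p_i⁻²)`, the `k`-th term equals
`p_k⁻² P (k-1) = P (k-1) - P k`, so the partial sums telescope to `1 - P n`.
By the Euler product, `P n → 1 / ζ(2) = 6 / π²`. -/

theorem sum_Icc_mul_prod_Ico_one_sub {R : Type*} [CommRing R] (x : ℕ → R) (n : ℕ) :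
    ∑ k ∈ Icc 1 n, x k * ∏ i ∈ Ico 1 k, (1 - x i) = 1 - ∏ i ∈ Icc 1 n, (1 - x i) := by
  induction n with
  | zero => simp
  | succ n ih =>
    rw [sum_Icc_succ_top (by omega), prod_Icc_succ_top (by omega), ih,
      Finset.Ico_add_one_right_eq_Icc]
    ring

theorem prod_Icc_sub_one_div_eq_inv_mul_prod_Ico_one_sub_inv {K : Type*} [Field K]
    {a : ℕ → K} (ha : ∀ i, a i ≠ 0) {k : ℕ} (hk : 1 ≤ k) (hak : a k ≠ 1) :
    (∏ i ∈ Icc 1 k, (a i - 1)) / ((a k - 1) * ∏ i ∈ Icc 1 k, a i) =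
      (a k)⁻¹ * ∏ i ∈ Ico 1 k, (1 - (a i)⁻¹) := by
  have hprod : ∏ i ∈ Ico 1 k, (1 - (a i)⁻¹) =
      (∏ i ∈ Ico 1 k, (a i - 1)) / ∏ i ∈ Ico 1 k, a i := by
    rw [← prod_div_distrib]
    exact prod_congr rfl fun i _ => by field_simp [ha i]
  rw [← Finset.Ico_add_one_right_eq_Icc, prod_Ico_succ_top hk, prod_Ico_succ_top hk, hprod]
  have hprod_ne : ∏ i ∈ Ico 1 k, a i ≠ 0 := prod_ne_zero_iff.mpr fun i _ => ha i
  field_simp [ha k, sub_ne_zero.mpr hak]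

noncomputable def invPowHom (m : ℕ) (hm : m ≠ 0) : ℕ →*₀ ℝ where
  toFun n := ((n : ℝ) ^ m)⁻¹
  map_zero' := by simp [hm]
  map_one' := by simp
  map_mul' a b := by push_cast; rw [mul_pow, mul_inv]

theorem tendsto_prod_primesBelow_one_sub_inv_pow {m : ℕ} (hm : 1 < m) :
    Tendsto (fun n => ∏ q ∈ Nat.primesBelow n, (1 - ((q : ℝ) ^ m)⁻¹)) atTop
      (𝓝 (∑' n : ℕ, ((n : ℝ) ^ m)⁻¹)⁻¹) := by
  have hsum : Summable fun n : ℕ => ((n : ℝ) ^ m)⁻¹ := by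
    simpa [one_div] using Real.summable_one_div_nat_pow.mpr hm
  have hpos : 0 < ∑' n : ℕ, ((n : ℝ) ^ m)⁻¹ :=
    lt_of_lt_of_le (by norm_num) (hsum.le_tsum 1 fun j _ => by positivity)
  have heuler := EulerProduct.eulerProduct_completely_multiplicative
    (f := invPowHom m (by omega)) (by simpa [invPowHom] using hsum)
  simpa [invPowHom, prod_inv_distrib] using heuler.inv₀ hpos.ne'

theorem Nat.primesBelow_nth_prime (k : ℕ) :
    Nat.primesBelow (Nat.nth Nat.Prime k) = (range k).image (Nat.nth Nat.Prime) := by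
  ext q
  simp only [Nat.mem_primesBelow, mem_image, mem_range]
  constructor
  · rintro ⟨hlt, hq⟩
    rw [← Nat.nth_count hq, Nat.nth_lt_nth Nat.infinite_setOfPred_prime] at hlt
    exact ⟨Nat.count Nat.Prime q, hlt, Nat.nth_count hq⟩
  · rintro ⟨j, hj, rfl⟩
    exact ⟨(Nat.nth_lt_nth Nat.infinite_setOfPred_prime).mpr hj, Nat.prime_nth_prime j⟩

theorem tendsto_prod_one_sub_inv_pow_nth_prime {m : ℕ} (hm : 1 < m) :
    Tendsto (fun k => ∏ j ∈ range k, (1 - ((Nat.nth Nat.Prime j : ℝ) ^ m)⁻¹)) atTop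
      (𝓝 (∑' n : ℕ, ((n : ℝ) ^ m)⁻¹)⁻¹) := by
  have hmono := Nat.nth_strictMono Nat.infinite_setOfPred_prime
  refine ((tendsto_prod_primesBelow_one_sub_inv_pow hm).comp hmono.tendsto_atTop).congr
    fun k => ?_
  rw [Function.comp_apply, Nat.primesBelow_nth_prime, prod_image hmono.injective.injOn]

theorem prod_Icc_p_eq_prod_range_nth_prime {M : Type*} [CommMonoid M] (f : ℕ → M) (n : ℕ) :
    ∏ i ∈ Icc 1 n, f (p i) = ∏ j ∈ range n, f (Nat.nth Nat.Prime j) := by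
  rw [← Finset.Ico_add_one_right_eq_Icc, prod_Ico_eq_prod_range]
  simp [p, add_comm 1]

theorem stmt_5 :
    Tendsto (fun n : ℕ => ∑ k ∈ Finset.Icc 1 n,
        (∏ i ∈ Finset.Icc 1 k, ((p i : ℝ) ^ 2 - 1)) /
          (((p k : ℝ) ^ 2 - 1) * ∏ i ∈ Finset.Icc 1 k, (p i : ℝ) ^ 2))
      atTop (𝓝 (1 - 6 / Real.pi ^ 2)) := by
  have two_le (i : ℕ) : (2 : ℝ) ≤ p i := by exact_mod_cast (Nat.prime_nth_prime _).two_le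
  have hsum (n : ℕ) : ∑ k ∈ Icc 1 n, (∏ i ∈ Icc 1 k, ((p i : ℝ) ^ 2 - 1)) /
      (((p k : ℝ) ^ 2 - 1) * ∏ i ∈ Icc 1 k, (p i : ℝ) ^ 2)
        = 1 - ∏ i ∈ Icc 1 n, (1 - ((p i : ℝ) ^ 2)⁻¹) := by
    rw [← sum_Icc_mul_prod_Ico_one_sub]
    refine sum_congr rfl fun k hk =>
      prod_Icc_sub_one_div_eq_inv_mul_prod_Ico_one_sub_inv (fun i => ?_) (mem_Icc.mp hk).1 ?_
    · have := two_le i; positivity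
    · have := two_le k; nlinarith
  have hprod : Tendsto (fun n => ∏ i ∈ Icc 1 n, (1 - ((p i : ℝ) ^ 2)⁻¹)) atTop
      (𝓝 (6 / Real.pi ^ 2)) := by
    have hzeta : ∑' n : ℕ, ((n : ℝ) ^ 2)⁻¹ = Real.pi ^ 2 / 6 := by
      simpa only [one_div] using hasSum_zeta_two.tsum_eq
    have := tendsto_prod_one_sub_inv_pow_nth_prime one_lt_two
    rw [hzeta, inv_div] at this
    simpa only [prod_Icc_p_eq_prod_range_nth_prime fun q : ℕ => 1 - ((q : ℝ) ^ 2)⁻¹]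
      using this
  simpa only [hsum] using tendsto_const_nhds.sub hprod
end

section
/- Assume the sum of reciprocals of twin primes converges (Brun's theorem), i.e., Σ 1/q over all primes q such that q or q−2 (with q odd) is a member of a twin prime pair converges. Then the series Σ_{k=1}^{∞} (∏_{i=1}^{k}(q_i − 1)) / ((q_k − 1) · ∏_{i=1}^{k} q_i), where (q_i) enumerates the twin-prime sequence 3, 5, 5, 7, 11, 13, 17, 19, ..., converges. -/
open Filter Finset Topology

/-!
The `k`-th term equals `(∏_{i<k} (1 - 1/q_i)) · 1/q_k`, a product of factors in `[0, 1]` times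
`1/q_k`, so the series is dominated termwise by Brun's series.
-/

/-- The `j`-th (0-indexed) lower member of a twin prime pair: 3, 5, 11, 17, 29, ... -/
noncomputable def lowerTwin (j : ℕ) : ℕ :=
  Nat.nth (fun q => q.Prime ∧ (q + 2).Prime) j

/-- The sequence listing all members of twin prime pairs with multiplicity:
3, 5, 5, 7, 11, 13, 17, 19, 29, 31, ... (0-indexed). -/
noncomputable def q (i : ℕ) : ℕ :=
  if i % 2 = 0 then lowerTwin (i / 2) else lowerTwin (i / 2) + 2

noncomputable def productRatioTerm (a : ℕ → ℝ) (k : ℕ) : ℝ :=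
  (∏ i ∈ range (k + 1), (a i - 1)) / ((a k - 1) * ∏ i ∈ range (k + 1), a i)

lemma productRatioTerm_eq_prod_mul (a : ℕ → ℝ) (k : ℕ) :
    productRatioTerm a k = (∏ i ∈ range k, (a i - 1) / a i) * ((a k - 1) / a k / (a k - 1)) := by
  rw [productRatioTerm, prod_div_distrib, prod_range_succ, prod_range_succ]
  simp only [div_eq_mul_inv, mul_inv]
  ring

lemma natCast_sub_one_div_self_nonneg (n : ℕ) : 0 ≤ ((n : ℝ) - 1) / n := by
  rcases n with _ | n
  · simp
  · push_cast
    rw [add_sub_cancel_right]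
    positivity

lemma natCast_sub_one_div_self_le_one (n : ℕ) : ((n : ℝ) - 1) / n ≤ 1 :=
  div_le_one_of_le₀ (by linarith) n.cast_nonneg

section DivDivSelf

variable {K : Type*} [Field K] [LinearOrder K] [IsStrictOrderedRing K] {x y : K}

lemma div_div_self_nonneg (hy : 0 ≤ y) : 0 ≤ x / y / x := by
  rcases eq_or_ne x 0 with rfl | hx
  · simp
  · rw [div_div_cancel_left' hx]
    exact inv_nonneg.mpr hy

lemma div_div_self_le_inv (hy : 0 ≤ y) : x / y / x ≤ y⁻¹ := by
  rcases eq_or_ne x 0 with rfl | hx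
  · simpa using hy
  · rw [div_div_cancel_left' hx]

end DivDivSelf

-- Division by zero makes every term with `a k ≤ 1` or some `a i = 0` vanish, so no positivity
-- of `a` is needed.
lemma productRatioTerm_natCast_nonneg (a : ℕ → ℕ) (k : ℕ) :
    0 ≤ productRatioTerm (fun i => (a i : ℝ)) k := by
  rw [productRatioTerm_eq_prod_mul]
  exact mul_nonneg (prod_nonneg fun i _ => natCast_sub_one_div_self_nonneg _)
    (div_div_self_nonneg (Nat.cast_nonneg _))

lemma productRatioTerm_natCast_le (a : ℕ → ℕ) (k : ℕ) :
    productRatioTerm (fun i => (a i : ℝ)) k ≤ 1 / (a k : ℝ) := by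
  rw [productRatioTerm_eq_prod_mul, one_div, ← one_mul (a k : ℝ)⁻¹]
  have hprod : ∏ i ∈ range k, ((a i : ℝ) - 1) / a i ≤ 1 :=
    prod_le_one (fun i _ => natCast_sub_one_div_self_nonneg _)
      fun i _ => natCast_sub_one_div_self_le_one _
  exact mul_le_mul hprod (div_div_self_le_inv (Nat.cast_nonneg _))
    (div_div_self_nonneg (Nat.cast_nonneg _)) zero_le_one

lemma summable_productRatioTerm_natCast {a : ℕ → ℕ} (ha : Summable fun i => 1 / (a i : ℝ)) :
    Summable (productRatioTerm fun i => (a i : ℝ)) :=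
  ha.of_nonneg_of_le (productRatioTerm_natCast_nonneg a) (productRatioTerm_natCast_le a)

theorem stmt_15 (brun : Summable fun i => 1 / (q i : ℝ)) :
    ∃ L : ℝ, Tendsto (fun n : ℕ => ∑ k ∈ Finset.range n,
        (∏ i ∈ Finset.range (k + 1), ((q i : ℝ) - 1)) /
          (((q k : ℝ) - 1) * ∏ i ∈ Finset.range (k + 1), (q i : ℝ)))
      atTop (𝓝 L) :=
  ⟨_, (summable_productRatioTerm_natCast brun).hasSum.tendsto_sum_nat⟩
end
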